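/- arXiv:2504.09950 — 2 statements merged into one kernel-verified Lean document; each statement's English description precedes it below -/
import Mathlib

section
/- Let N(n, s, T) denote the number of sequences in Σ₄^n whose last run is s = {a}^t with t ≤ ℓ, all of whose runs have length at most ℓ, and whose synthesis time is at most T. Then for n > t and T ≥ 4(t-1) + a, N(n, {a}^t, T) = Σ over runs s' = {a'}^{t'} with a' ≠ a, 1 ≤ t' ≤ ℓ, of N(n - t, s', T - 4(t-1) - ((a - a') mod 4)), where the shifted modulo takes values in {1,2,3,4}. -/
/-!
Cutting the last run `{a}^t` off a sequence is a bijection onto the sequences of length `n - t`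
whose last run `{a'}^{t'}` has `a' ≠ a`. Since the symbol changes at the cut, no run straddles it,
so the ℓ-RLL property passes in both directions, and the synthesis time drops by exactly
`smod (a - a') + 4 (t - 1)`: the first symbol of the run costs `smod (a - a')`, each repetition a
full cycle `smod 0 = 4`. Summing over the possible last runs `(a', t')` of the shortened
sequence gives the recursion.
-/

open scoped Classical

/-- Shifted modulo: maps any integer to {1,2,3,4}, with `smod x ≡ x [ZMOD 4]`. -/
def smod (x : ℤ) : ℤ := (x - 1) % 4 + 1

/-- Auxiliary synthesis-time sum over the differential sequence. -/
def synthAux : ℤ → List ℤ → ℤ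
  | _, [] => 0
  | prev, b :: rest => smod (b - prev) + synthAux b rest

/-- Synthesis time `T(c) = Σ dᵢ(c)` with `d₁ = c₁`, `dᵢ = (cᵢ - c_{i-1}) mod 4` (shifted). -/
def synth : List ℤ → ℤ
  | [] => 0
  | a :: rest => a + synthAux a rest

/-- Membership in the alphabet Σ₄ = {1,2,3,4}. -/
def inSigma4 (c : List ℤ) : Prop := ∀ x ∈ c, 1 ≤ x ∧ x ≤ 4

/-- ℓ-runlength-limited: no ℓ+1 consecutive equal symbols. -/
def RLL (ℓ : ℕ) (c : List ℤ) : Prop :=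
  ∀ a ∈ c, ¬ (List.replicate (ℓ + 1) a <:+: c)

/-- The last (maximal constant) run of `c` is `{a}^t`. -/
def lastRunIs (c : List ℤ) (a : ℤ) (t : ℕ) : Prop :=
  List.replicate t a <:+ c ∧ ¬ (List.replicate (t + 1) a <:+ c)

/-- The finite set of all length-`n` sequences over Σ₄ = {1,2,3,4}. -/
def seqs (n : ℕ) : Finset (List ℤ) :=
  (Finset.univ : Finset (Fin n → Fin 4)).image
    (fun f => (List.ofFn f).map (fun x : Fin 4 => ((x : ℕ) : ℤ) + 1))

/-- GC-content: number of symbols greater than 2 (i.e. C or G). -/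
def gc (c : List ℤ) : ℕ := (c.filter (fun x => 2 < x)).length

/-- Length-`n` ℓ-RLL sequences with last run `{a}^t` and synthesis time at most `T`. -/
noncomputable def Cset (n ℓ : ℕ) (a : ℤ) (t : ℕ) (T : ℤ) : Finset (List ℤ) :=
  (seqs n).filter (fun c => RLL ℓ c ∧ lastRunIs c a t ∧ synth c ≤ T)

noncomputable def Ncount (n ℓ : ℕ) (a : ℤ) (t : ℕ) (T : ℤ) : ℕ := (Cset n ℓ a t T).card
namespace List

variable {α : Type*}

theorem replicate_infix_append_of_getLast?_ne_head? {b : α} {k : ℕ} {l₁ l₂ : List α}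
    (hsep : l₁.getLast? ≠ l₂.head?) (hk : replicate k b <:+: l₁ ++ l₂) :
    replicate k b <:+: l₁ ∨ replicate k b <:+: l₂ := by
  rcases infix_append_iff_ne_nil.1 hk with h₁ | h₂ | ⟨m₁, m₂, hm₁, hm₂, hm, hs, hp⟩
  · exact .inl h₁
  · exact .inr h₂
  · obtain ⟨-, hm₁b, hm₂b⟩ := append_eq_replicate_iff.1 hm.symm
    have hl₁ : l₁.getLast? = some b := by
      rw [← singleton_suffix_iff_getLast?_eq_some]
      refine .trans ?_ hs
      rw [hm₁b, suffix_replicate_iff]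
      exact ⟨length_pos_iff.2 hm₁, rfl⟩
    have hl₂ : l₂.head? = some b := by
      rw [← singleton_prefix_iff_head?_eq_some]
      refine .trans ?_ hp
      rw [hm₂b, prefix_replicate_iff]
      exact ⟨length_pos_iff.2 hm₂, rfl⟩
    exact absurd (hl₁.trans hl₂.symm) hsep

end List

open List

theorem RLL.of_infix {ℓ : ℕ} {c l : List ℤ} (hc : RLL ℓ c) (hl : l <:+: c) : RLL ℓ l :=
  fun b hb hrun => hc b (hl.subset hb) (hrun.trans hl)

theorem RLL_replicate {ℓ t : ℕ} (a : ℤ) (htℓ : t ≤ ℓ) : RLL ℓ (replicate t a) := by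
  intro b _ hrun
  have := hrun.length_le
  simp only [length_replicate] at this
  omega

theorem RLL_append {ℓ : ℕ} {l₁ l₂ : List ℤ} (hsep : l₁.getLast? ≠ l₂.head?) :
    RLL ℓ (l₁ ++ l₂) ↔ RLL ℓ l₁ ∧ RLL ℓ l₂ := by
  refine ⟨fun h => ⟨h.of_infix infix_append_left, h.of_infix infix_append_right⟩,
    fun ⟨h₁, h₂⟩ b _ hrun => ?_⟩
  have hb : b ∈ replicate (ℓ + 1) b := mem_replicate.2 ⟨by omega, rfl⟩
  rcases replicate_infix_append_of_getLast?_ne_head? hsep hrun with h | h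
  · exact h₁ b (h.subset hb) h
  · exact h₂ b (h.subset hb) h

theorem lastRunIs_iff {c : List ℤ} {a : ℤ} {t : ℕ} :
    lastRunIs c a t ↔ ∃ p, c = p ++ replicate t a ∧ p.getLast? ≠ some a := by
  rw [lastRunIs, replicate_succ, ← singleton_append]
  constructor
  · rintro ⟨⟨p, rfl⟩, hmax⟩
    exact ⟨p, rfl, fun hp =>
      hmax (suffix_append_self_iff.2 (singleton_suffix_iff_getLast?_eq_some.2 hp))⟩
  · rintro ⟨p, rfl, hp⟩
    exact ⟨suffix_append p _, fun h =>
      hp (singleton_suffix_iff_getLast?_eq_some.1 (suffix_append_self_iff.1 h))⟩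

theorem lastRunIs.getLast?_eq {c : List ℤ} {a : ℤ} {t : ℕ} (h : lastRunIs c a t)
    (ht : 1 ≤ t) : c.getLast? = some a := by
  obtain ⟨p, rfl, -⟩ := lastRunIs_iff.1 h
  simp [getLast?_replicate, show t ≠ 0 by omega]

theorem lastRunIs.le_of_replicate_suffix {c : List ℤ} {a : ℤ} {t s : ℕ} (h : lastRunIs c a t)
    (hs : replicate s a <:+ c) : s ≤ t := by
  by_contra! hts
  exact h.2 ((suffix_replicate_iff.2 ⟨by simpa using hts, by simp⟩).trans hs)

theorem lastRunIs.unique {c : List ℤ} {a a' : ℤ} {t t' : ℕ} (h : lastRunIs c a t)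
    (h' : lastRunIs c a' t') (ht : 1 ≤ t) (ht' : 1 ≤ t') : a = a' ∧ t = t' := by
  obtain rfl : a = a' := Option.some.inj ((h.getLast?_eq ht).symm.trans (h'.getLast?_eq ht'))
  exact ⟨rfl, le_antisymm (h'.le_of_replicate_suffix h.1) (h.le_of_replicate_suffix h'.1)⟩

theorem lastRunIs.le_of_RLL {ℓ : ℕ} {c : List ℤ} {a : ℤ} {t : ℕ} (h : lastRunIs c a t)
    (hc : RLL ℓ c) : t ≤ ℓ := by
  by_contra! htℓ
  have hrun : replicate (ℓ + 1) a <:+ c :=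
    (suffix_replicate_iff.2 ⟨by simpa using htℓ, by simp⟩).trans h.1
  exact hc a (hrun.subset (mem_replicate.2 ⟨by omega, rfl⟩)) hrun.isInfix

theorem exists_lastRunIs {c : List ℤ} {a : ℤ} (hc : c.getLast? = some a) :
    ∃ t, 1 ≤ t ∧ lastRunIs c a t := by
  have h₁ : replicate 1 a <:+ c := singleton_suffix_iff_getLast?_eq_some.2 hc
  have hlen : 1 ≤ c.length := by simpa using h₁.length_le
  refine ⟨Nat.findGreatest (replicate · a <:+ c) c.length, Nat.le_findGreatest hlen h₁,
    Nat.findGreatest_spec (P := (replicate · a <:+ c)) hlen h₁, fun hmax => ?_⟩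
  exact Nat.findGreatest_is_greatest (Nat.lt_succ_self _) (by simpa using hmax.length_le) hmax

theorem synthAux_append (prev : ℤ) (l m : List ℤ) :
    synthAux prev (l ++ m) = synthAux prev l + synthAux (l.getLastD prev) m := by
  induction l generalizing prev with
  | nil => simp [synthAux]
  | cons x l ih =>
    rw [cons_append, synthAux, synthAux, ih, getLastD_cons, add_assoc]

theorem synthAux_replicate_succ (prev a : ℤ) (t : ℕ) :
    synthAux prev (replicate (t + 1) a) = smod (a - prev) + 4 * t := by
  induction t generalizing prev with
  | zero => simp [synthAux]
  | succ t ih =>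
    rw [replicate_succ, synthAux, ih, sub_self, show smod 0 = 4 by decide]
    push_cast
    ring

theorem synth_append_replicate {p : List ℤ} {b : ℤ} (hp : p.getLast? = some b)
    (a : ℤ) (t : ℕ) :
    synth (p ++ replicate (t + 1) a) = synth p + smod (a - b) + 4 * t := by
  obtain _ | ⟨x, l⟩ := p
  · simp at hp
  · rw [getLast?_cons, Option.some_inj, ← getLastD_eq_getLast?] at hp
    rw [cons_append, synth, synth, synthAux_append, synthAux_replicate_succ, hp, add_assoc]
    ring

theorem inSigma4_append {l₁ l₂ : List ℤ} :
    inSigma4 (l₁ ++ l₂) ↔ inSigma4 l₁ ∧ inSigma4 l₂ :=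
  forall_mem_append

theorem mem_seqs {n : ℕ} {c : List ℤ} : c ∈ seqs n ↔ c.length = n ∧ inSigma4 c := by
  constructor
  · rintro hc
    obtain ⟨f, -, rfl⟩ := Finset.mem_image.1 hc
    refine ⟨by simp, fun x hx => ?_⟩
    obtain ⟨i, -, rfl⟩ := mem_map.1 hx
    omega
  · rintro ⟨rfl, hc⟩
    refine Finset.mem_image.2 ⟨fun i => ⟨(c.get i - 1).toNat, ?_⟩, Finset.mem_univ _, ?_⟩
    · have := hc _ (get_mem c i)
      omega
    · refine ext_getElem (by simp) fun i _ hi => ?_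
      have := hc _ (getElem_mem hi)
      simp only [getElem_map, List.getElem_ofFn, get_eq_getElem]
      omega


theorem append_replicate_mem_Cset_iff {n ℓ t t' : ℕ} {a a' T : ℤ} {p : List ℤ}
    (ha : 1 ≤ a ∧ a ≤ 4) (ht : 1 ≤ t) (htℓ : t ≤ ℓ) (htn : t ≤ n) (hp : lastRunIs p a' t')
    (ht' : 1 ≤ t') (ha' : a' ≠ a) :
    p ++ replicate t a ∈ Cset n ℓ a t T ↔
      p ∈ Cset (n - t) ℓ a' t' (T - 4 * ((t : ℤ) - 1) - smod (a - a')) := by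
  have hlast : p.getLast? = some a' := hp.getLast?_eq ht'
  have hsep : p.getLast? ≠ (replicate t a).head? := by
    simp [hlast, head?_replicate, show t ≠ 0 by omega, ha']
  have hrun : lastRunIs (p ++ replicate t a) a t := lastRunIs_iff.2 ⟨p, rfl, by simpa [hlast]⟩
  have hrep : inSigma4 (replicate t a) := fun x hx => eq_of_mem_replicate hx ▸ ha
  obtain ⟨s, rfl⟩ : ∃ s, t = s + 1 := ⟨t - 1, by omega⟩
  simp only [Cset, Finset.mem_filter, mem_seqs, inSigma4_append, RLL_append hsep,
    RLL_replicate a htℓ, synth_append_replicate hlast, length_append, length_replicate, hrun,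
    hp, hrep, and_true, true_and]
  push_cast
  exact and_congr (and_congr_left' (by omega))
    (and_congr_right' (by constructor <;> intro <;> linarith))

theorem Cset_disjoint {n ℓ t₁ t₂ : ℕ} {a₁ a₂ T₁ T₂ : ℤ} (ht₁ : 1 ≤ t₁) (ht₂ : 1 ≤ t₂)
    (hne : (a₁, t₁) ≠ (a₂, t₂)) : Disjoint (Cset n ℓ a₁ t₁ T₁) (Cset n ℓ a₂ t₂ T₂) := by
  refine Finset.disjoint_left.2 fun c h₁ h₂ => hne ?_
  obtain ⟨rfl, rfl⟩ :=
    (Finset.mem_filter.1 h₁).2.2.1.unique (Finset.mem_filter.1 h₂).2.2.1 ht₁ ht₂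
  rfl

theorem Cset_eq_biUnion {n ℓ t : ℕ} {a T : ℤ} (ha : 1 ≤ a ∧ a ≤ 4) (ht : 1 ≤ t) (htℓ : t ≤ ℓ)
    (hn : t < n) :
    Cset n ℓ a t T = ((({1, 2, 3, 4} : Finset ℤ).erase a) ×ˢ Finset.Icc 1 ℓ).biUnion fun r =>
      (Cset (n - t) ℓ r.1 r.2 (T - 4 * ((t : ℤ) - 1) - smod (a - r.1))).image
        (· ++ replicate t a) := by
  ext c
  simp only [Finset.mem_biUnion, Finset.mem_image, Finset.mem_product, Finset.mem_erase,
    Finset.mem_Icc, Prod.exists]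
  constructor
  · intro hc
    obtain ⟨hseq, hrll, hrun, -⟩ := Finset.mem_filter.1 hc
    obtain ⟨p, rfl, hpa⟩ := lastRunIs_iff.1 hrun
    obtain ⟨hlen, hc₄⟩ := mem_seqs.1 hseq
    obtain ⟨a', hlast⟩ : ∃ a', p.getLast? = some a' := by
      refine Option.ne_none_iff_exists'.1 fun hnil => ?_
      rw [getLast?_eq_none_iff] at hnil
      simp [hnil] at hlen
      omega
    obtain ⟨t', ht', hp⟩ := exists_lastRunIs hlast
    have ha' : a' ≠ a := fun h => hpa (h ▸ hlast)
    have ha'₄ : a' ∈ ({1, 2, 3, 4} : Finset ℤ) := by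
      have := hc₄ a' (mem_append_left _ (mem_of_getLast? hlast))
      simp only [Finset.mem_insert, Finset.mem_singleton]
      omega
    exact ⟨a', t', ⟨⟨ha', ha'₄⟩, ht', hp.le_of_RLL (hrll.of_infix infix_append_left)⟩, p,
      (append_replicate_mem_Cset_iff ha ht htℓ hn.le hp ht' ha').1 hc, rfl⟩
  · rintro ⟨a', t', ⟨⟨ha', -⟩, ht', -⟩, p, hp, rfl⟩
    exact (append_replicate_mem_Cset_iff ha ht htℓ hn.le (Finset.mem_filter.1 hp).2.2.1 ht'
      ha').2 hp

theorem stmt4_general (n ℓ t : ℕ) (a : ℤ) (T : ℤ)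
    (ht : 1 ≤ t) (htℓ : t ≤ ℓ) (ha : 1 ≤ a ∧ a ≤ 4)
    (hn : t < n) :
    Ncount n ℓ a t T =
      ∑ a' ∈ ({1, 2, 3, 4} : Finset ℤ).erase a, ∑ t' ∈ Finset.Icc 1 ℓ,
        Ncount (n - t) ℓ a' t' (T - 4 * ((t : ℤ) - 1) - smod (a - a')) := by
  rw [Ncount, Cset_eq_biUnion ha ht htℓ hn, Finset.card_biUnion, Finset.sum_product]
  · exact Finset.sum_congr rfl fun a' _ => Finset.sum_congr rfl fun t' _ =>
      Finset.card_image_of_injective _ (append_left_injective _)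
  · rintro ⟨a₁, t₁⟩ h₁ ⟨a₂, t₂⟩ h₂ hne
    exact (Finset.disjoint_image (append_left_injective _)).2 <|
      Cset_disjoint (Finset.mem_Icc.1 (Finset.mem_product.1 h₁).2).1
        (Finset.mem_Icc.1 (Finset.mem_product.1 h₂).2).1 hne

theorem stmt4 (n ℓ t : ℕ) (a : ℤ) (T : ℤ)
    (hℓ : 1 ≤ ℓ) (ht : 1 ≤ t) (htℓ : t ≤ ℓ) (ha : 1 ≤ a ∧ a ≤ 4)
    (hn : t < n) (hT : 4 * ((t : ℤ) - 1) + a ≤ T) :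
    Ncount n ℓ a t T =
      ∑ a' ∈ ({1, 2, 3, 4} : Finset ℤ).erase a, ∑ t' ∈ Finset.Icc 1 ℓ,
        Ncount (n - t) ℓ a' t' (T - 4 * ((t : ℤ) - 1) - smod (a - a')) :=
  stmt4_general n ℓ t a T ht htℓ ha hn
end

section
/- The unranking procedure is a bijection: for fixed n, ℓ, T, with N(n, ℓ, T) the total number of length-n ℓ-RLL sequences over Σ₄ with synthesis time at most T, ordering these sequences by (recursively) the length of the last run, then the symbol of the last run, then the order of the prefix, yields a strict total order, and hence there is a bijection between [1, N(n, ℓ, T)] and the set of such sequences. -/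
open scoped Classical

/-- Length of the maximal constant prefix. -/
def headRunLen : List ℤ → ℕ
  | [] => 0
  | a :: rest => 1 + (rest.takeWhile (fun x => x = a)).length

/-- Length of the last (maximal constant) run. -/
def lastRunLen (c : List ℤ) : ℕ := headRunLen c.reverse

lemma lastRunLen_pos {c : List ℤ} (h : c ≠ []) : 0 < lastRunLen c := by
  have hr : c.reverse ≠ [] := by simpa using h
  obtain ⟨x, l, hxl⟩ := List.exists_cons_of_ne_nil hr
  unfold lastRunLen
  rw [hxl]
  simp only [headRunLen]
  omega

/-- The recursive order: compare the length of the last run, then its symbol,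
then recursively the prefixes obtained by removing the last run. -/
def seqLT (c₁ c₂ : List ℤ) : Prop :=
  if h : c₁ = [] ∨ c₂ = [] then False
  else
    lastRunLen c₁ < lastRunLen c₂ ∨
      (lastRunLen c₁ = lastRunLen c₂ ∧
        (c₁.getLastD 0 < c₂.getLastD 0 ∨
          (c₁.getLastD 0 = c₂.getLastD 0 ∧
            seqLT (c₁.take (c₁.length - lastRunLen c₁))
              (c₂.take (c₂.length - lastRunLen c₂)))))
termination_by c₁.length
decreasing_by
  push_neg at h
  have h1 := lastRunLen_pos h.1
  have h2 : 0 < c₁.length := List.length_pos_iff.mpr h.1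
  rw [List.length_take]
  omega


/-! An order that compares last runs lexicographically and then recurses on the remaining prefix
is a strict order by well-founded induction on the length, and it is total on sequences of a
common length because a sequence is recovered from its last run and the prefix before it.
A strict total order on a finite set `s` then enumerates `s` increasingly by `1, …, #s`. -/

def dropLastRun (c : List ℤ) : List ℤ := c.take (c.length - lastRunLen c)

theorem seqLT_iff {c₁ c₂ : List ℤ} (h₁ : c₁ ≠ []) (h₂ : c₂ ≠ []) :
    seqLT c₁ c₂ ↔
      lastRunLen c₁ < lastRunLen c₂ ∨
        (lastRunLen c₁ = lastRunLen c₂ ∧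
          (c₁.getLastD 0 < c₂.getLastD 0 ∨
            (c₁.getLastD 0 = c₂.getLastD 0 ∧ seqLT (dropLastRun c₁) (dropLastRun c₂)))) := by
  rw [seqLT, dif_neg (not_or.2 ⟨h₁, h₂⟩)]
  rfl

theorem ne_nil_of_seqLT {c₁ c₂ : List ℤ} (h : seqLT c₁ c₂) : c₁ ≠ [] ∧ c₂ ≠ [] := by
  rw [seqLT] at h
  split_ifs at h with hnil
  exact not_or.1 hnil

theorem exists_eq_append_replicate_lastRunLen (c : List ℤ) :
    ∃ d, c = d ++ List.replicate (lastRunLen c) (c.getLastD 0) := by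
  rcases hc : c.reverse with _ | ⟨a, l⟩
  · exact ⟨[], by simp_all [lastRunLen, headRunLen]⟩
  obtain rfl : c = (a :: l).reverse := by rw [← hc, List.reverse_reverse]
  have hrun : l.takeWhile (· = a) = List.replicate (l.takeWhile (· = a)).length a :=
    List.eq_replicate_iff.2 ⟨rfl, fun b hb => by simpa using List.mem_takeWhile_imp hb⟩
  refine ⟨(l.dropWhile (· = a)).reverse, ?_⟩
  conv_lhs => rw [← List.takeWhile_append_dropWhile (p := (· = a)) (l := l), hrun]
  simp [lastRunLen, headRunLen, Nat.one_add, List.replicate_succ']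

theorem dropLastRun_append_replicate (c : List ℤ) :
    dropLastRun c ++ List.replicate (lastRunLen c) (c.getLastD 0) = c := by
  obtain ⟨d, hd⟩ := exists_eq_append_replicate_lastRunLen c
  have hlen : c.length = d.length + lastRunLen c := by simpa using congrArg List.length hd
  have hdrop : dropLastRun c = d := by
    rw [dropLastRun, hlen, Nat.add_sub_cancel, hd, List.take_left]
  rw [hdrop, ← hd]

theorem length_dropLastRun_lt {c : List ℤ} (h : c ≠ []) : (dropLastRun c).length < c.length := by
  have := lastRunLen_pos h
  have := List.length_pos_iff.2 h
  rw [dropLastRun, List.length_take]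
  omega

theorem seqLT_irrefl (c : List ℤ) : ¬ seqLT c c := by
  intro h
  have hc := (ne_nil_of_seqLT h).1
  rw [seqLT_iff hc hc] at h
  rcases h with h | ⟨-, h | ⟨-, h⟩⟩
  · exact lt_irrefl _ h
  · exact lt_irrefl _ h
  · exact seqLT_irrefl _ h
termination_by c.length
decreasing_by exact length_dropLastRun_lt hc

theorem seqLT_trans {c₁ c₂ c₃ : List ℤ} (h₁₂ : seqLT c₁ c₂) (h₂₃ : seqLT c₂ c₃) :
    seqLT c₁ c₃ := by
  obtain ⟨hc₁, hc₂⟩ := ne_nil_of_seqLT h₁₂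
  have hc₃ := (ne_nil_of_seqLT h₂₃).2
  rw [seqLT_iff hc₁ hc₂] at h₁₂
  rw [seqLT_iff hc₂ hc₃] at h₂₃
  rw [seqLT_iff hc₁ hc₃]
  rcases h₁₂ with hk₁₂ | ⟨hk₁₂, ha₁₂ | ⟨ha₁₂, hp₁₂⟩⟩ <;>
    rcases h₂₃ with hk₂₃ | ⟨hk₂₃, ha₂₃ | ⟨ha₂₃, hp₂₃⟩⟩
  case inr.inr.inr.inr =>
    exact Or.inr ⟨hk₁₂.trans hk₂₃, Or.inr ⟨ha₁₂.trans ha₂₃, seqLT_trans hp₁₂ hp₂₃⟩⟩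
  all_goals first
    | exact Or.inl (by omega)
    | exact Or.inr ⟨by omega, Or.inl (by omega)⟩
termination_by c₁.length
decreasing_by exact length_dropLastRun_lt hc₁

theorem seqLT_total_of_length_eq {c₁ c₂ : List ℤ} (hlen : c₁.length = c₂.length)
    (hne : c₁ ≠ c₂) : seqLT c₁ c₂ ∨ seqLT c₂ c₁ := by
  have hc₁ : c₁ ≠ [] := by
    rintro rfl
    exact hne (List.length_eq_zero_iff.1 hlen.symm).symm
  have hc₂ : c₂ ≠ [] := by
    rintro rfl
    exact hne (List.length_eq_zero_iff.1 hlen)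
  rw [seqLT_iff hc₁ hc₂, seqLT_iff hc₂ hc₁]
  rcases lt_trichotomy (lastRunLen c₁) (lastRunLen c₂) with hk | hk | hk
  · exact Or.inl (Or.inl hk)
  swap
  · exact Or.inr (Or.inl hk)
  rcases lt_trichotomy (c₁.getLastD 0) (c₂.getLastD 0) with ha | ha | ha
  · exact Or.inl (Or.inr ⟨hk, Or.inl ha⟩)
  swap
  · exact Or.inr (Or.inr ⟨hk.symm, Or.inl ha⟩)
  have hp : dropLastRun c₁ ≠ dropLastRun c₂ := fun hp => hne <| by
    rw [← dropLastRun_append_replicate c₁, ← dropLastRun_append_replicate c₂, hp, hk, ha]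
  have hplen : (dropLastRun c₁).length = (dropLastRun c₂).length := by
    simp only [dropLastRun, List.length_take, hlen, hk]
  rcases seqLT_total_of_length_eq hplen hp with h | h
  · exact Or.inl (Or.inr ⟨hk, Or.inr ⟨ha, h⟩⟩)
  · exact Or.inr (Or.inr ⟨hk.symm, Or.inr ⟨ha.symm, h⟩⟩)
termination_by c₁.length
decreasing_by exact length_dropLastRun_lt hc₁

theorem length_of_mem_seqs {n : ℕ} {c : List ℤ} (h : c ∈ seqs n) : c.length = n := by
  obtain ⟨f, -, rfl⟩ := Finset.mem_image.1 h
  simp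

theorem Finset.exists_bijOn_Icc_of_isStrictTotalOrderOn {α : Type*} [Inhabited α]
    (s : Finset α) (r : α → α → Prop) (irrefl : ∀ a ∈ s, ¬ r a a)
    (trans : ∀ a ∈ s, ∀ b ∈ s, ∀ c ∈ s, r a b → r b c → r a c)
    (total : ∀ a ∈ s, ∀ b ∈ s, a ≠ b → r a b ∨ r b a) :
    ∃ φ : ℕ → α, Set.BijOn φ (Finset.Icc 1 s.card) s ∧
      ∀ i ∈ Finset.Icc 1 s.card, ∀ j ∈ Finset.Icc 1 s.card, i < j → r (φ i) (φ j) := by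
  have : IsStrictTotalOrder s (fun a b => r a b) :=
    { irrefl := fun a => irrefl a a.2
      trans := fun a b c => trans a a.2 b b.2 c c.2
      trichotomous := fun a b hab hba => by
        by_contra hne
        exact (total a a.2 b b.2 (Subtype.coe_ne_coe.2 hne)).elim hab hba }
  let : LinearOrder s := linearOrderOfSTO (fun a b => r a b)
  let e := monoEquivOfFin s (Fintype.card_coe s)
  let φ : ℕ → α := fun i => if h : i - 1 < s.card then e ⟨i - 1, h⟩ else default
  have hφ : ∀ i (h : i ∈ Finset.Icc 1 s.card),
      φ i = e ⟨i - 1, by have := Finset.mem_Icc.1 h; omega⟩ :=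
    fun i h => dif_pos _
  have maps : Set.MapsTo φ (Finset.Icc 1 s.card) s := fun i hi => by
    rw [hφ i hi]
    exact (e _).2
  have mono : ∀ i ∈ Finset.Icc 1 s.card, ∀ j ∈ Finset.Icc 1 s.card, i < j → r (φ i) (φ j) :=
    fun i hi j hj hij => by
      rw [hφ i hi, hφ j hj]
      simp only [Finset.mem_Icc] at hi hj
      exact e.strictMono (Fin.mk_lt_mk.2 (by omega))
  have inj : Set.InjOn φ (Finset.Icc 1 s.card) := fun i hi j hj hij => by
    by_contra hne
    rcases lt_or_gt_of_ne hne with h | h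
    · exact irrefl _ (maps hj) (hij ▸ mono i hi j hj h)
    · exact irrefl _ (maps hi) (hij ▸ mono j hj i hi h)
  exact ⟨φ, ⟨maps, inj, Finset.surjOn_of_injOn_of_card_le φ maps inj (by simp)⟩, mono⟩

theorem stmt12 (n ℓ : ℕ) (T : ℤ) :
    (∀ c₁ ∈ (seqs n).filter (fun c => RLL ℓ c ∧ synth c ≤ T),
      ∀ c₂ ∈ (seqs n).filter (fun c => RLL ℓ c ∧ synth c ≤ T),
      ∀ c₃ ∈ (seqs n).filter (fun c => RLL ℓ c ∧ synth c ≤ T),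
        seqLT c₁ c₂ → seqLT c₂ c₃ → seqLT c₁ c₃) ∧
    (∀ c₁ ∈ (seqs n).filter (fun c => RLL ℓ c ∧ synth c ≤ T),
      ∀ c₂ ∈ (seqs n).filter (fun c => RLL ℓ c ∧ synth c ≤ T), c₁ ≠ c₂ →
        (seqLT c₁ c₂ ∨ seqLT c₂ c₁) ∧ ¬ (seqLT c₁ c₂ ∧ seqLT c₂ c₁)) ∧
    (∃ φ : ℕ → List ℤ,
      Set.BijOn φ (Finset.Icc 1 ((seqs n).filter (fun c => RLL ℓ c ∧ synth c ≤ T)).card)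
        ((seqs n).filter (fun c => RLL ℓ c ∧ synth c ≤ T) : Set (List ℤ)) ∧
      ∀ i ∈ Finset.Icc 1 ((seqs n).filter (fun c => RLL ℓ c ∧ synth c ≤ T)).card,
        ∀ j ∈ Finset.Icc 1 ((seqs n).filter (fun c => RLL ℓ c ∧ synth c ≤ T)).card,
          i < j → seqLT (φ i) (φ j)) := by
  set s := (seqs n).filter (fun c => RLL ℓ c ∧ synth c ≤ T)
  have total : ∀ c₁ ∈ s, ∀ c₂ ∈ s, c₁ ≠ c₂ → seqLT c₁ c₂ ∨ seqLT c₂ c₁ :=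
    fun c₁ h₁ c₂ h₂ => seqLT_total_of_length_eq <|
      (length_of_mem_seqs (Finset.mem_filter.1 h₁).1).trans
        (length_of_mem_seqs (Finset.mem_filter.1 h₂).1).symm
  refine ⟨fun _ _ _ _ _ _ => seqLT_trans, fun c₁ h₁ c₂ h₂ hne => ⟨total c₁ h₁ c₂ h₂ hne, ?_⟩,
    s.exists_bijOn_Icc_of_isStrictTotalOrderOn seqLT (fun c _ => seqLT_irrefl c)
      (fun _ _ _ _ _ _ => seqLT_trans) total⟩
  exact fun ⟨h₁₂, h₂₁⟩ => seqLT_irrefl c₁ (seqLT_trans h₁₂ h₂₁)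
end
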